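/- Let G be a finite abstract simplicial complex and x ∈ G. Then the unit ball B(x) is a contractible simplicial complex. -/
import Mathlib


open Finset Polynomial

namespace SphereFormula

variable {V : Type} [DecidableEq V]

/-- A finite abstract simplicial complex: a finite collection of nonempty finite sets
that is closed under taking nonempty subsets. -/
def IsComplex (G : Finset (Finset V)) : Prop :=
  ∀ x ∈ G, x.Nonempty ∧ ∀ y, y ⊆ x → y.Nonempty → y ∈ G

/-- `w x = (-1)^(dim x)` where `dim x = |x| - 1`. -/
def w (x : Finset V) : ℤ := (-1) ^ (x.card - 1)

/-- Euler characteristic of a finite set of simplices: `χ(A) = Σ_{x ∈ A} w x`. -/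
def chi (A : Finset (Finset V)) : ℤ := ∑ x ∈ A, w x

/-- The star `U(x) = {y ∈ G : x ⊆ y}`. -/
def star (G : Finset (Finset V)) (x : Finset V) : Finset (Finset V) :=
  G.filter fun y => x ⊆ y

/-- The unit ball `B(x) = {z ∈ G : z ⊆ y for some y ∈ U(x)}` (closure of the star). -/
def ball (G : Finset (Finset V)) (x : Finset V) : Finset (Finset V) :=
  G.filter fun z => ∃ y ∈ G, x ⊆ y ∧ z ⊆ y

/-- The unit sphere `S(x) = B(x) \ U(x)`. -/
def sphere (G : Finset (Finset V)) (x : Finset V) : Finset (Finset V) :=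
  ball G x \ star G x

/-- The vertex set of `G`: those `v` with `{v} ∈ G`. -/
def verts (G : Finset (Finset V)) : Finset V :=
  (G.biUnion id).filter fun v => {v} ∈ G

/-- Contractibility, defined inductively: a single vertex complex is contractible, and `G`
is contractible if there is `x ∈ G` with both `S(x)` and `G \ U(x)` contractible. -/
inductive Contractible : Finset (Finset V) → Prop where
  | point (v : V) : Contractible ({({v} : Finset V)} : Finset (Finset V))
  | step (G : Finset (Finset V)) (x : Finset V) (hx : x ∈ G)
      (hS : Contractible (sphere G x)) (hG : Contractible (G \ star G x)) :
      Contractible G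

mutual
  /-- `G` is a `d`-manifold (`d ≥ 0`): every unit sphere `S(x)` is a `(d-1)`-sphere. -/
  inductive IsManifold : ℤ → Finset (Finset V) → Prop where
    | mk (d : ℤ) (G : Finset (Finset V)) (hd : 0 ≤ d)
        (h : ∀ x ∈ G, IsSphere (d - 1) (sphere G x)) : IsManifold d G

  /-- `d`-spheres: the empty complex is the `(-1)`-sphere, and a `d`-sphere is a
  `d`-manifold `G` such that `G \ U(x)` is contractible for some `x ∈ G`. -/
  inductive IsSphere : ℤ → Finset (Finset V) → Prop where
    | empty : IsSphere (-1) (∅ : Finset (Finset V))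
    | mk (d : ℤ) (G : Finset (Finset V)) (hm : IsManifold d G)
        (h : ∃ x ∈ G, Contractible (G \ star G x)) : IsSphere d G
end

/-- The f-function `f_G(t) = 1 + Σ_{k ≥ 0} f_k(G) t^(k+1) = 1 + Σ_{x ∈ G} t^|x|`. -/
noncomputable def fPoly (G : Finset (Finset V)) : Polynomial ℚ :=
  1 + ∑ x ∈ G, Polynomial.X ^ x.card

/-- `F_H(t) = ∫_0^t f_H(s) ds = t + Σ_{k ≥ 0} f_k(H) t^(k+2)/(k+2)`. -/
noncomputable def FPoly (H : Finset (Finset V)) : Polynomial ℚ :=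
  Polynomial.X +
    ∑ x ∈ H, Polynomial.C (((x.card : ℚ) + 1)⁻¹) * Polynomial.X ^ (x.card + 1)

/-- The join `G + H = G ∪ H ∪ {x ∪ y : x ∈ G, y ∈ H}`. -/
def joinC (G H : Finset (Finset V)) : Finset (Finset V) :=
  G ∪ H ∪ (G ×ˢ H).image fun p => p.1 ∪ p.2

/-- The barycentric refinement: simplices are the nonempty chains in `(G, ⊆)`. -/
def bary (G : Finset (Finset V)) : Finset (Finset (Finset V)) :=
  G.powerset.filter fun c => c.Nonempty ∧ ∀ x ∈ c, ∀ y ∈ c, x ⊆ y ∨ y ⊆ x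

/-- `f` is locally injective: distinct vertices of a common simplex have distinct values. -/
def LocallyInjective (G : Finset (Finset V)) (f : V → ℤ) : Prop :=
  ∀ x ∈ G, ∀ v ∈ x, ∀ u ∈ x, v ≠ u → f v ≠ f u

lemma cone_contractible' :
    ∀ (n : ℕ) (C : Finset (Finset V)), C.card ≤ n → IsComplex C → ∀ v : V, {v} ∈ C →
      (∀ z ∈ C, z ∪ {v} ∈ C) → Contractible C := by
  intro n
  induction n with
  | zero =>
    intro C hc _ v hv _
    rw [Nat.le_zero, Finset.card_eq_zero] at hc
    subst hc
    exact absurd hv (Finset.notMem_empty _)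
  | succ n IH =>
    intro C hc hC v hv hcone
    by_cases hSe : (C.filter fun z => v ∉ z) = ∅
    · -- all simplices contain v, so C = {{v}}
      have hall : ∀ z ∈ C, z = {v} := by
        intro z hz
        have hvz : v ∈ z := by
          by_contra h
          have : z ∈ C.filter fun z => v ∉ z := Finset.mem_filter.2 ⟨hz, h⟩
          rw [hSe] at this
          exact Finset.notMem_empty _ this
        have hsub : z ⊆ {v} := by
          intro u hu
          by_contra hu'
          have huv : u ≠ v := by simpa using hu'
          have h1 : ({u} : Finset V) ∈ C :=
            (hC z hz).2 {u} (Finset.singleton_subset_iff.2 hu) ⟨u, Finset.mem_singleton_self u⟩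
          have : ({u} : Finset V) ∈ C.filter fun z => v ∉ z :=
            Finset.mem_filter.2 ⟨h1, by simp [huv.symm]⟩
          rw [hSe] at this
          exact Finset.notMem_empty _ this
        exact Finset.Subset.antisymm hsub (Finset.singleton_subset_iff.2 hvz)
      have hCeq : C = {({v} : Finset V)} := by
        apply Finset.Subset.antisymm
        · intro z hz; rw [Finset.mem_singleton]; exact hall z hz
        · intro z hz; rw [Finset.mem_singleton] at hz; subst hz; exact hv
      rw [hCeq]
      exact Contractible.point v
    · -- pick z of maximal card among simplices not containing v
      obtain ⟨z, hzmem, hzmax⟩ := Finset.exists_max_image _ Finset.card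
        (Finset.nonempty_of_ne_empty hSe)
      obtain ⟨hzC, hzv⟩ := Finset.mem_filter.1 hzmem
      have hmax : ∀ w ∈ C, v ∉ w → z ⊆ w → w = z := by
        intro w hw hwv hzw
        exact (Finset.eq_of_subset_of_card_le hzw
          (hzmax w (Finset.mem_filter.2 ⟨hw, hwv⟩))).symm
      have hzne : z.Nonempty := (hC z hzC).1
      have hzvC : z ∪ {v} ∈ C := hcone z hzC
      have hzsub : z ⊆ z ∪ {v} := Finset.subset_union_left
      -- star C z = {z, z ∪ {v}}
      have hstar : star C z = {z, z ∪ {v}} := by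
        ext w
        simp only [star, Finset.mem_filter, Finset.mem_insert, Finset.mem_singleton]
        constructor
        · rintro ⟨hwC, hzw⟩
          by_cases hvw : v ∈ w
          · right
            have h1 : z ⊆ w \ {v} := by
              intro u hu
              exact Finset.mem_sdiff.2 ⟨hzw hu, by simp; rintro rfl; exact hzv hu⟩
            have h2 : (w \ {v}).Nonempty := hzne.mono h1
            have h3 : w \ {v} ∈ C := (hC w hwC).2 _ Finset.sdiff_subset h2
            have h4 : w \ {v} = z := hmax _ h3 (by simp) h1
            rw [← h4]
            ext u
            simp only [Finset.mem_union, Finset.mem_sdiff, Finset.mem_singleton]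
            constructor
            · intro hu; by_cases h : u = v
              · right; exact h
              · left; exact ⟨hu, h⟩
            · rintro (⟨hu, _⟩ | rfl)
              · exact hu
              · exact hvw
          · left; exact hmax w hwC hvw hzw
        · rintro (rfl | rfl)
          · exact ⟨hzC, Finset.Subset.refl _⟩
          · exact ⟨hzvC, hzsub⟩
      -- characterize the sphere
      have hsph : ∀ w, w ∈ sphere C z ↔ (w ∈ C ∧ w ⊆ z ∪ {v} ∧ ¬ z ⊆ w) := by
        intro w
        simp only [sphere, ball, Finset.mem_sdiff, Finset.mem_filter, hstar,
          Finset.mem_insert, Finset.mem_singleton]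
        constructor
        · rintro ⟨⟨hwC, y, hyC, hzy, hwy⟩, hns⟩
          have hy : y ∈ ({z, z ∪ {v}} : Finset (Finset V)) := by
            rw [← hstar]; exact Finset.mem_filter.2 ⟨hyC, hzy⟩
          simp only [Finset.mem_insert, Finset.mem_singleton] at hy
          refine ⟨hwC, ?_, ?_⟩
          · rcases hy with rfl | rfl
            · exact hwy.trans hzsub
            · exact hwy
          · intro hzw
            apply hns
            by_cases hvw : v ∈ w
            · right
              apply Finset.Subset.antisymm
              · rcases hy with rfl | rfl
                · exact hwy.trans hzsub
                · exact hwy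
              · exact Finset.union_subset hzw (Finset.singleton_subset_iff.2 hvw)
            · left
              exact hmax w hwC hvw hzw
        · rintro ⟨hwC, hwsub, hnzw⟩
          refine ⟨⟨hwC, z ∪ {v}, hzvC, hzsub, hwsub⟩, ?_⟩
          rintro (rfl | rfl)
          · exact hnzw (Finset.Subset.refl _)
          · exact hnzw hzsub
      have hvnz : ¬ z ⊆ {v} := by
        intro h
        obtain ⟨u, hu⟩ := hzne
        have := h hu
        rw [Finset.mem_singleton] at this
        subst this
        exact hzv hu
      -- the sphere is contractible
      have hsphC : Contractible (sphere C z) := by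
        apply IH _ ?_ ?_ v ?_ ?_
        · have hss : sphere C z ⊂ C := by
            constructor
            · intro w hw; exact ((hsph w).1 hw).1
            · intro h
              have := (hsph z).1 (h hzC)
              exact this.2.2 (Finset.Subset.refl z)
          have := Finset.card_lt_card hss
          omega
        · intro w hw
          obtain ⟨hwC, hwsub, hnzw⟩ := (hsph w).1 hw
          refine ⟨(hC w hwC).1, ?_⟩
          intro y hyw hyne
          rw [hsph]
          exact ⟨(hC w hwC).2 y hyw hyne, hyw.trans hwsub, fun h => hnzw (h.trans hyw)⟩
        · rw [hsph]
          refine ⟨hv, by simp, hvnz⟩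
        · intro w hw
          obtain ⟨hwC, hwsub, hnzw⟩ := (hsph w).1 hw
          rw [hsph]
          refine ⟨hcone w hwC, Finset.union_subset hwsub (by simp), ?_⟩
          intro h
          apply hnzw
          intro u hu
          have := h hu
          rw [Finset.mem_union, Finset.mem_singleton] at this
          rcases this with h' | rfl
          · exact h'
          · exact absurd hu hzv
      -- C \ star C z is contractible
      have hrest : ∀ w, w ∈ C \ star C z ↔ (w ∈ C ∧ ¬ z ⊆ w) := by
        intro w
        simp only [Finset.mem_sdiff, star, Finset.mem_filter]
        tauto
      have hrestC : Contractible (C \ star C z) := by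
        apply IH _ ?_ ?_ v ?_ ?_
        · have hss : C \ star C z ⊂ C := by
            constructor
            · exact Finset.sdiff_subset
            · intro h
              have := (hrest z).1 (h hzC)
              exact this.2 (Finset.Subset.refl z)
          have := Finset.card_lt_card hss
          omega
        · intro w hw
          obtain ⟨hwC, hnzw⟩ := (hrest w).1 hw
          refine ⟨(hC w hwC).1, ?_⟩
          intro y hyw hyne
          rw [hrest]
          exact ⟨(hC w hwC).2 y hyw hyne, fun h => hnzw (h.trans hyw)⟩
        · rw [hrest]; exact ⟨hv, hvnz⟩
        · intro w hw
          obtain ⟨hwC, hnzw⟩ := (hrest w).1 hw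
          rw [hrest]
          refine ⟨hcone w hwC, ?_⟩
          intro h
          apply hnzw
          intro u hu
          have := h hu
          rw [Finset.mem_union, Finset.mem_singleton] at this
          rcases this with h' | rfl
          · exact h'
          · exact absurd hu hzv
      exact Contractible.step C z hzC hsphC hrestC

/-- every unit ball `B(x)` is a contractible simplicial complex. -/
theorem contractible_ball {V : Type} [DecidableEq V]
    (G : Finset (Finset V)) (hG : IsComplex G) (x : Finset V) (hx : x ∈ G) :
    Contractible (ball G x) := by
  obtain ⟨v, hvx⟩ := (hG x hx).1
  have hball : ∀ z, z ∈ ball G x ↔ (z ∈ G ∧ ∃ y ∈ G, x ⊆ y ∧ z ⊆ y) := by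
    intro z; simp [ball]
  have hBC : IsComplex (ball G x) := by
    intro z hz
    obtain ⟨hzG, y, hyG, hxy, hzy⟩ := (hball z).1 hz
    refine ⟨(hG z hzG).1, ?_⟩
    intro w hwz hwne
    rw [hball]
    exact ⟨(hG z hzG).2 w hwz hwne, y, hyG, hxy, hwz.trans hzy⟩
  have hvB : ({v} : Finset V) ∈ ball G x := by
    rw [hball]
    exact ⟨(hG x hx).2 {v} (Finset.singleton_subset_iff.2 hvx)
      ⟨v, Finset.mem_singleton_self v⟩, x, hx, Finset.Subset.refl x,
      Finset.singleton_subset_iff.2 hvx⟩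
  have hcone : ∀ z ∈ ball G x, z ∪ {v} ∈ ball G x := by
    intro z hz
    obtain ⟨hzG, y, hyG, hxy, hzy⟩ := (hball z).1 hz
    have hsub : z ∪ {v} ⊆ y :=
      Finset.union_subset hzy (Finset.singleton_subset_iff.2 (hxy hvx))
    rw [hball]
    exact ⟨(hG y hyG).2 _ hsub ⟨v, by simp⟩, y, hyG, hxy, hsub⟩
  exact cone_contractible' (ball G x).card (ball G x) le_rfl hBC v hvB hcone


end SphereFormula
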